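/- arXiv:1205.4382 — 3 statements merged into one kernel-verified Lean document; each statement's English description precedes it below -/
import Mathlib

section
/- Let G = (V,E) be a finite simple connected graph which is regular of degree 3 and has |V| > 4 vertices. Then the generic rank satisfies r(G) = |E| (equivalently, the generic stress number s(G) = 0, i.e. there exists p : V → ℝ² for which the edge vectors {v_{ij}(p) : {i,j} ∈ E} are linearly independent). -/
noncomputable section

open Classical in
/-- The edge vector of the pair `(i, j)` under the realization `p`: the function `V → ℝ × ℝ`
whose value is `p i - p j` at `i`, `p j - p i` at `j`, and `0` elsewhere. -/
def edgeVec {V : Type*} (p : V → ℝ × ℝ) (i j : V) : V → ℝ × ℝ :=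
  fun v => if v = i then p i - p j else if v = j then p j - p i else 0

/-- The set of edge vectors of a set `F` of (potential) edges under the realization `p`. -/
def edgeVecs {V : Type*} (p : V → ℝ × ℝ) (F : Set (Sym2 V)) : Set (V → ℝ × ℝ) :=
  {x | ∃ i j, s(i, j) ∈ F ∧ x = edgeVec p i j}

/-- The rank of the edge vectors of `F` under the realization `p`. -/
def rankOf {V : Type*} (p : V → ℝ × ℝ) (F : Set (Sym2 V)) : ℕ :=
  Module.finrank ℝ (Submodule.span ℝ (edgeVecs p F))

/-- The generic rank of a set of edges: the maximum over all realizations `p` of the rank. -/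
def genRankSet {V : Type*} (F : Set (Sym2 V)) : ℕ :=
  ⨆ p : V → ℝ × ℝ, rankOf p F

/-- The generic rank `r(G)` of a graph. -/
def genRank {V : Type*} (G : SimpleGraph V) : ℕ := genRankSet G.edgeSet

/-- The stress number `s_p(F)` of a set of edges under the realization `p`
(the dimension of the space of resolvable stresses). -/
def stressNum {V : Type*} (p : V → ℝ × ℝ) (F : Set (Sym2 V)) : ℕ :=
  F.ncard - rankOf p F

/-- The generic stress number `s(F)` of a set of edges. -/
def genStressSet {V : Type*} (F : Set (Sym2 V)) : ℕ := F.ncard - genRankSet F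

/-- The generic stress number `s(G)` of a graph. -/
def genStress {V : Type*} (G : SimpleGraph V) : ℕ := G.edgeSet.ncard - genRank G

/-- A planar configuration is in general position if it is injective and no three distinct
vertices have collinear images. -/
def GeneralPosition {V : Type*} (p : V → ℝ × ℝ) : Prop :=
  Function.Injective p ∧
    ∀ i j k : V, i ≠ j → j ≠ k → i ≠ k →
      ¬ Collinear ℝ ({p i, p j, p k} : Set (ℝ × ℝ))

/-- `W_U`: the subspace of functions `V → ℝ × ℝ` vanishing at every vertex outside `U`. -/
def vanishOn {V : Type*} (U : Set V) : Submodule ℝ (V → ℝ × ℝ) where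
  carrier := {f | ∀ v ∉ U, f v = 0}
  zero_mem' := fun v _ => rfl
  add_mem' := by
    intro a b ha hb v hv
    simp [Pi.add_apply, ha v hv, hb v hv]
  smul_mem' := by
    intro c f hf v hv
    simp [Pi.smul_apply, hf v hv]

end

/-!
Realizations with linearly independent edge vectors are built, by induction on the number of
non-isolated vertices, for every graph `H` with maximum degree at most three and no `K₄`.
A vertex `v` of degree at most two is added to a realization of `H - v`: the edge vectors of
`H - v` vanish at `v`, while those at `v` take the values `p v - p w` there, which are independent
for `p v` in general position. A vertex of degree three is removed and replaced by an edge `ab`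
between two non-adjacent neighbours, chosen so that no `K₄` appears; putting `v` at the midpoint
of `ab` gives `e_ab = 2 (e_va + e_vb)`, so `va, vb` can trade places with `ab`. Independence is an
open condition in `p`, so the general-position requirements are met by small perturbations.
A connected cubic graph on more than four vertices contains no `K₄`, and an independent
realization has rank `|E|`.
-/

open Function Set Submodule

section LinearAlgebra

variable {ι R M N : Type*} [Ring R] [AddCommGroup M] [Module R M] [AddCommGroup N] [Module R N]

theorem LinearIndepOn.union_of_comp {f : ι → M} {s t : Set ι} (φ : M →ₗ[R] N)
    (hs : LinearIndepOn R f s) (hφ : ∀ i ∈ s, φ (f i) = 0) (ht : LinearIndepOn R (φ ∘ f) t) :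
    LinearIndepOn R f (s ∪ t) :=
  hs.union_of_quotient <| LinearIndepOn.of_comp
    ((span R (f '' s)).liftQ φ (span_le.2 <| by rintro _ ⟨i, hi, rfl⟩; exact hφ i hi)) ht

theorem LinearIndepOn.exchange {K V : Type*} [DivisionRing K] [AddCommGroup V] [Module K V]
    {f : ι → V} {s : Set ι} {i j : ι} (h : LinearIndepOn K f (insert i s)) (hi : i ∉ s)
    (hij : f i ∈ span K (f '' insert j s)) : LinearIndepOn K f (insert j s) := by
  rw [linearIndepOn_insert hi] at h
  refine linearIndepOn_insert_iff.2 ⟨h.1, fun hj => (h.2 ?_).elim⟩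
  rwa [image_insert_eq, span_insert_eq_span hj] at hij

end LinearAlgebra

def cross (u w : ℝ × ℝ) : ℝ := u.1 * w.2 - u.2 * w.1

theorem linearIndepOn_pair_of_cross_ne_zero {ι : Type*} {f : ι → ℝ × ℝ} {i j : ι} (hij : i ≠ j)
    (h : cross (f i) (f j) ≠ 0) : LinearIndepOn ℝ f {i, j} := by
  refine (LinearIndepOn.pair_iff f hij).2 fun c d hcd => ?_
  have h1 := congrArg Prod.fst hcd
  have h2 := congrArg Prod.snd hcd
  simp only [Prod.fst_add, Prod.snd_add, Prod.smul_fst, Prod.smul_snd, smul_eq_mul,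
    Prod.fst_zero, Prod.snd_zero] at h1 h2
  refine ⟨(mul_eq_zero.1 ?_).resolve_right h, (mul_eq_zero.1 ?_).resolve_right h⟩
  · unfold cross; linear_combination (f j).2 * h1 - (f j).1 * h2
  · unfold cross; linear_combination (f i).1 * h2 - (f i).2 * h1

theorem cross_rotate_pos {d : ℝ × ℝ} (hd : d ≠ 0) : 0 < cross d (-d.2, d.1) := by
  have : d.1 ≠ 0 ∨ d.2 ≠ 0 := by
    by_contra! h
    exact hd (Prod.ext h.1 h.2)
  have hsq : cross d (-d.2, d.1) = d.1 ^ 2 + d.2 ^ 2 := by unfold cross; ring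
  rw [hsq]
  rcases this with h | h
  · exact add_pos_of_pos_of_nonneg (sq_pos_of_ne_zero h) (sq_nonneg _)
  · exact add_pos_of_nonneg_of_pos (sq_nonneg _) (sq_pos_of_ne_zero h)

section EdgeVector

variable {V : Type*}

theorem edgeVec_comm (p : V → ℝ × ℝ) (i j : V) : edgeVec p i j = edgeVec p j i := by
  funext v
  unfold edgeVec
  split_ifs <;> simp_all

noncomputable def edgeVector (p : V → ℝ × ℝ) : Sym2 V → V → ℝ × ℝ :=
  Sym2.lift ⟨edgeVec p, edgeVec_comm p⟩

@[simp]
theorem edgeVector_mk (p : V → ℝ × ℝ) (i j : V) : edgeVector p s(i, j) = edgeVec p i j := rfl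

theorem edgeVector_mk_apply_left (p : V → ℝ × ℝ) (i j : V) :
    edgeVector p s(i, j) i = p i - p j := by
  simp [edgeVec]

theorem edgeVector_apply_of_notMem (p : V → ℝ × ℝ) {e : Sym2 V} {u : V} (hu : u ∉ e) :
    edgeVector p e u = 0 := by
  induction e using Sym2.ind with
  | _ i j =>
    simp only [Sym2.mem_iff, not_or] at hu
    simp [edgeVec, hu.1, hu.2]

theorem edgeVector_update_of_notMem [DecidableEq V] (p : V → ℝ × ℝ) {v : V} (q : ℝ × ℝ)
    {e : Sym2 V} (hv : v ∉ e) : edgeVector (update p v q) e = edgeVector p e := by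
  induction e using Sym2.ind with
  | _ i j =>
    simp only [Sym2.mem_iff, not_or] at hv
    simp only [edgeVector_mk]
    unfold edgeVec
    rw [update_of_ne (Ne.symm hv.1), update_of_ne (Ne.symm hv.2)]

theorem edgeVector_eq_two_smul_add {p : V → ℝ × ℝ} {v a b : V} (hva : v ≠ a) (hvb : v ≠ b)
    (hab : a ≠ b) (hv : p v = midpoint ℝ (p a) (p b)) :
    edgeVector p s(a, b) = (2 : ℝ) • (edgeVector p s(v, a) + edgeVector p s(v, b)) := by
  rw [midpoint_eq_smul_add, invOf_eq_inv] at hv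
  funext u
  simp only [edgeVector_mk, edgeVec, Pi.smul_apply, Pi.add_apply]
  by_cases hu : u = v
  · subst hu
    simp only [if_pos, hva, hvb, if_false, hv]
    module
  · by_cases hua : u = a
    · subst hua
      simp only [if_pos, hu, hab, if_false, hv]
      module
    · by_cases hub : u = b
      · subst hub
        simp only [if_pos, hu, hua, if_false, hv]
        module
      · simp [hu, hua, hub]

theorem continuous_edgeVector (e : Sym2 V) : Continuous fun p : V → ℝ × ℝ => edgeVector p e := by
  induction e using Sym2.ind with
  | _ i j =>
    refine continuous_pi fun u => ?_
    simp only [edgeVector_mk, edgeVec]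
    split_ifs <;> fun_prop

theorem edgeVecs_eq_image (p : V → ℝ × ℝ) (F : Set (Sym2 V)) :
    edgeVecs p F = edgeVector p '' F := by
  ext x
  constructor
  · rintro ⟨i, j, hij, rfl⟩
    exact ⟨s(i, j), hij, rfl⟩
  · rintro ⟨e, he, rfl⟩
    induction e using Sym2.ind with
    | _ i j => exact ⟨i, j, he, rfl⟩

end EdgeVector

theorem rankOf_eq_finrank_span_range {V : Type*} (p : V → ℝ × ℝ) (F : Set (Sym2 V)) :
    rankOf p F = Module.finrank ℝ (span ℝ (range fun e : F => edgeVector p e)) := by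
  rw [rankOf, edgeVecs_eq_image, image_eq_range]

section Rank

variable {V : Type*} [Finite V]

theorem rankOf_le_ncard (p : V → ℝ × ℝ) (F : Set (Sym2 V)) : rankOf p F ≤ F.ncard := by
  have := Fintype.ofFinite F
  rw [rankOf_eq_finrank_span_range, ← Nat.card_coe_set_eq, Nat.card_eq_fintype_card]
  exact finrank_range_le_card _

theorem rankOf_eq_ncard {p : V → ℝ × ℝ} {F : Set (Sym2 V)}
    (hp : LinearIndepOn ℝ (edgeVector p) F) : rankOf p F = F.ncard := by
  have := Fintype.ofFinite F
  rw [rankOf_eq_finrank_span_range, ← Nat.card_coe_set_eq, Nat.card_eq_fintype_card]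
  exact finrank_span_eq_card hp

theorem genRankSet_eq_ncard {p : V → ℝ × ℝ} {F : Set (Sym2 V)}
    (hp : LinearIndepOn ℝ (edgeVector p) F) : genRankSet F = F.ncard :=
  le_antisymm (ciSup_le fun q => rankOf_le_ncard q F)
    (rankOf_eq_ncard hp ▸ le_ciSup ⟨F.ncard, by rintro _ ⟨q, rfl⟩; exact rankOf_le_ncard q F⟩ p)

end Rank

section Perturbation

open Filter Topology

variable {V : Type*} [Fintype V] {F : Set (Sym2 V)} {p : V → ℝ × ℝ}

theorem isOpen_setOf_linearIndepOn_edgeVector (F : Set (Sym2 V)) :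
    IsOpen {p : V → ℝ × ℝ | LinearIndepOn ℝ (edgeVector p) F} :=
  have hcont : Continuous fun (p : V → ℝ × ℝ) (e : F) => edgeVector p e :=
    continuous_pi fun e => continuous_edgeVector (e : Sym2 V)
  (isOpen_setOfPred_linearIndependent (𝕜 := ℝ) (E := V → ℝ × ℝ) (ι := F)).preimage hcont

theorem exists_linearIndepOn_of_update [DecidableEq V] (hp : LinearIndepOn ℝ (edgeVector p) F)
    (c : V) (w : ℝ × ℝ) {P : (V → ℝ × ℝ) → Prop}
    (hP : ∀ t : ℝ, t ≠ 0 → P (update p c (p c + t • w))) :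
    ∃ p', LinearIndepOn ℝ (edgeVector p') F ∧ P p' := by
  have hcurve : Continuous fun t : ℝ => update p c (p c + t • w) := by fun_prop
  have hnhds : ∀ᶠ t in 𝓝[≠] (0 : ℝ),
      LinearIndepOn ℝ (edgeVector (update p c (p c + t • w))) F :=
    nhdsWithin_le_nhds <| ((isOpen_setOf_linearIndepOn_edgeVector F).preimage hcurve).mem_nhds
      (by simpa using hp)
  obtain ⟨t, ht, ht0⟩ := (hnhds.and self_mem_nhdsWithin).exists
  exact ⟨_, ht, hP t ht0⟩

theorem exists_linearIndepOn_ne (hp : LinearIndepOn ℝ (edgeVector p) F) {a b : V} (hab : a ≠ b) :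
    ∃ p', LinearIndepOn ℝ (edgeVector p') F ∧ p' a ≠ p' b := by
  classical
  by_cases h : p a = p b
  · refine exists_linearIndepOn_of_update hp a (1, 0) fun t ht => ?_
    simp [update_of_ne hab.symm, h, ht]
  · exact ⟨p, hp, h⟩

theorem exists_linearIndepOn_cross_ne_zero (hp : LinearIndepOn ℝ (edgeVector p) F) {a b c : V}
    (hab : a ≠ b) (hca : c ≠ a) (hcb : c ≠ b) :
    ∃ p', LinearIndepOn ℝ (edgeVector p') F ∧ cross (p' b - p' a) (p' c - p' a) ≠ 0 := by
  classical
  obtain ⟨p, hp, hne⟩ := exists_linearIndepOn_ne hp hab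
  by_cases h : cross (p b - p a) (p c - p a) = 0
  · set d := p b - p a
    refine exists_linearIndepOn_of_update hp c (-d.2, d.1) fun t ht => ?_
    have hpos := cross_rotate_pos (sub_ne_zero.2 hne.symm)
    rw [update_self, update_of_ne hca.symm, update_of_ne hcb.symm]
    have hsplit : cross d (p c + t • (-d.2, d.1) - p a) =
        cross d (p c - p a) + t * cross d (-d.2, d.1) := by
      simp only [cross, Prod.fst_add, Prod.snd_add, Prod.fst_sub, Prod.snd_sub, Prod.smul_fst,
        Prod.smul_snd, smul_eq_mul]
      ring
    rw [hsplit, h, zero_add]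
    exact mul_ne_zero ht hpos.ne'
  · exact ⟨p, hp, h⟩

end Perturbation

namespace SimpleGraph

variable {V : Type*} {G H : SimpleGraph V} {p : V → ℝ × ℝ} {v : V}

theorem incidenceSet_eq_image (H : SimpleGraph V) (v : V) :
    H.incidenceSet v = (fun w => s(v, w)) '' H.neighborSet v := by
  ext e
  induction e using Sym2.ind with
  | _ x y =>
    simp only [mk'_mem_incidenceSet_iff, mem_image, mem_neighborSet, Sym2.eq_iff]
    constructor
    · rintro ⟨hxy, rfl | rfl⟩
      · exact ⟨y, hxy, Or.inl ⟨rfl, rfl⟩⟩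
      · exact ⟨x, hxy.symm, Or.inr ⟨rfl, rfl⟩⟩
    · rintro ⟨w, hw, ⟨rfl, rfl⟩ | ⟨rfl, rfl⟩⟩
      · exact ⟨hw, Or.inl rfl⟩
      · exact ⟨hw.symm, Or.inr rfl⟩

theorem edgeSet_eq_union_incidenceSet (H : SimpleGraph V) (v : V) :
    H.edgeSet = (H.deleteIncidenceSet v).edgeSet ∪ H.incidenceSet v := by
  rw [edgeSet_deleteIncidenceSet, sdiff_union_of_subset (H.incidenceSet_subset v)]

theorem notMem_of_mem_edgeSet_deleteIncidenceSet {e : Sym2 V}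
    (he : e ∈ (H.deleteIncidenceSet v).edgeSet) : v ∉ e := by
  rw [edgeSet_deleteIncidenceSet] at he
  exact fun hv => he.2 ⟨he.1, hv⟩

theorem notMem_of_mem_edgeSet_sup_edge {a b : V} {e : Sym2 V} (hva : v ≠ a) (hvb : v ≠ b)
    (he : e ∈ (H.deleteIncidenceSet v ⊔ edge a b).edgeSet) : v ∉ e := by
  rw [edgeSet_sup, mem_union] at he
  rcases he with he | he
  · exact notMem_of_mem_edgeSet_deleteIncidenceSet he
  · rw [mem_singleton_iff.1 (edgeSet_edge_subset he)]
    simp [hva, hvb]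

theorem support_sup_edge_subset {v a b : V} (ha : H.Adj v a) (hb : H.Adj v b) :
    (H.deleteIncidenceSet v ⊔ edge a b).support ⊆ H.support \ {v} := by
  rintro u ⟨w, hw⟩
  simp only [sup_adj, deleteIncidenceSet_adj, edge_adj] at hw
  rcases hw with ⟨huw, huv, -⟩ | ⟨⟨rfl, rfl⟩ | ⟨rfl, rfl⟩, -⟩
  · exact ⟨⟨w, huw⟩, huv⟩
  · exact ⟨⟨v, ha.symm⟩, ha.ne'⟩
  · exact ⟨⟨v, hb.symm⟩, hb.ne'⟩

theorem linearIndepOn_edgeVector_of_deleteIncidenceSet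
    (hp : LinearIndepOn ℝ (edgeVector p) (H.deleteIncidenceSet v).edgeSet)
    (hv : LinearIndepOn ℝ (fun w => p v - p w) (H.neighborSet v)) :
    LinearIndepOn ℝ (edgeVector p) H.edgeSet := by
  rw [edgeSet_eq_union_incidenceSet H v]
  refine hp.union_of_comp (LinearMap.proj v) (fun e he => ?_) ?_
  · exact edgeVector_apply_of_notMem p (notMem_of_mem_edgeSet_deleteIncidenceSet he)
  · rw [incidenceSet_eq_image]
    exact LinearIndepOn.image_of_comp _ _ <|
      hv.congr fun w _ => (edgeVector_mk_apply_left p v w).symm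

theorem linearIndepOn_edgeVector_of_edgeSplit {a b c : V} (hab : a ≠ b)
    (hN : H.neighborSet v = {a, b, c}) (hnadj : ¬ H.Adj a b)
    (hp : LinearIndepOn ℝ (edgeVector p) (H.deleteIncidenceSet v ⊔ edge a b).edgeSet)
    (hmid : p v = midpoint ℝ (p a) (p b)) (hc : cross (p b - p a) (p c - p a) ≠ 0) :
    LinearIndepOn ℝ (edgeVector p) H.edgeSet := by
  set E₀ := (H.deleteIncidenceSet v).edgeSet
  have hva : v ≠ a := H.ne_of_adj (show a ∈ H.neighborSet v by simp [hN])
  have hvb : v ≠ b := H.ne_of_adj (show b ∈ H.neighborSet v by simp [hN])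
  have hac : a ≠ c := by
    rintro rfl
    simp [cross] at hc
  have hE' : (H.deleteIncidenceSet v ⊔ edge a b).edgeSet = insert s(a, b) E₀ := by
    rw [edgeSet_sup, edgeSet_edge_of_ne hab, union_singleton]
  have hE : H.edgeSet = insert s(v, b) (E₀ ∪ {s(v, a), s(v, c)}) := by
    rw [edgeSet_eq_union_incidenceSet H v, incidenceSet_eq_image, hN]
    ext e
    simp only [image_insert_eq, image_singleton, mem_insert_iff, mem_union, mem_singleton_iff]
    tauto
  have hab_notMem : s(a, b) ∉ E₀ ∪ {s(v, a), s(v, c)} := by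
    simp only [mem_union, mem_insert_iff, mem_singleton_iff, Sym2.eq_iff, not_or]
    refine ⟨fun h => hnadj (deleteIncidenceSet_le H v h), ?_, ?_⟩ <;> tauto
  have hmid_cross : cross (p v - p a) (p v - p c) = -(1 / 2) * cross (p b - p a) (p c - p a) := by
    simp only [hmid, midpoint_eq_smul_add, invOf_eq_inv, cross, Prod.fst_sub, Prod.snd_sub,
      Prod.smul_fst, Prod.smul_snd, Prod.fst_add, Prod.snd_add, smul_eq_mul]
    ring
  have hindep : LinearIndepOn ℝ (edgeVector p) (insert s(a, b) (E₀ ∪ {s(v, a), s(v, c)})) := by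
    rw [← insert_union, ← hE']
    refine hp.union_of_comp (LinearMap.proj v) (fun e he =>
      edgeVector_apply_of_notMem p (notMem_of_mem_edgeSet_sup_edge hva hvb he)) ?_
    refine linearIndepOn_pair_of_cross_ne_zero (by simp [hac, hva.symm]) ?_
    simp only [comp_apply, LinearMap.proj_apply, edgeVector_mk_apply_left, hmid_cross]
    exact mul_ne_zero (by norm_num) hc
  rw [hE]
  refine hindep.exchange hab_notMem ?_
  rw [edgeVector_eq_two_smul_add hva hvb hab hmid]
  exact smul_mem _ _ <| add_mem (subset_span ⟨s(v, a), by simp, rfl⟩)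
    (subset_span ⟨s(v, b), by simp, rfl⟩)

theorem exists_linearIndepOn_edgeVector_of_ncard_neighborSet_le_two [Fintype V]
    (hp : LinearIndepOn ℝ (edgeVector p) (H.deleteIncidenceSet v).edgeSet)
    (hv : (H.neighborSet v).ncard ≤ 2) : ∃ p', LinearIndepOn ℝ (edgeVector p') H.edgeSet := by
  obtain h | h | h : (H.neighborSet v).ncard = 0 ∨ (H.neighborSet v).ncard = 1 ∨
      (H.neighborSet v).ncard = 2 := by omega
  · rw [ncard_eq_zero] at h
    exact ⟨p, linearIndepOn_edgeVector_of_deleteIncidenceSet hp (h ▸ linearIndepOn_empty _ _)⟩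
  · obtain ⟨a, ha⟩ := ncard_eq_one.1 h
    have hva : v ≠ a := H.ne_of_adj (show a ∈ H.neighborSet v by simp [ha])
    obtain ⟨p', hp', hne⟩ := exists_linearIndepOn_ne hp hva
    refine ⟨p', linearIndepOn_edgeVector_of_deleteIncidenceSet hp' ?_⟩
    rw [ha, linearIndepOn_singleton_iff]
    exact sub_ne_zero.2 hne
  · obtain ⟨a, b, hab, hN⟩ := ncard_eq_two.1 h
    have hva : v ≠ a := H.ne_of_adj (show a ∈ H.neighborSet v by simp [hN])
    have hvb : v ≠ b := H.ne_of_adj (show b ∈ H.neighborSet v by simp [hN])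
    obtain ⟨p', hp', hcross⟩ := exists_linearIndepOn_cross_ne_zero hp hab hva hvb
    refine ⟨p', linearIndepOn_edgeVector_of_deleteIncidenceSet hp' ?_⟩
    rw [hN]
    refine linearIndepOn_pair_of_cross_ne_zero hab ?_
    convert hcross using 1
    simp only [cross, Prod.fst_sub, Prod.snd_sub]
    ring

theorem exists_linearIndepOn_edgeVector_of_edgeSplit [Fintype V] {a b c : V}
    (hab : a ≠ b) (hca : c ≠ a) (hcb : c ≠ b) (hN : H.neighborSet v = {a, b, c})
    (hnadj : ¬ H.Adj a b)
    (hp : LinearIndepOn ℝ (edgeVector p) (H.deleteIncidenceSet v ⊔ edge a b).edgeSet) :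
    ∃ p', LinearIndepOn ℝ (edgeVector p') H.edgeSet := by
  classical
  have hva : v ≠ a := H.ne_of_adj (show a ∈ H.neighborSet v by simp [hN])
  have hvb : v ≠ b := H.ne_of_adj (show b ∈ H.neighborSet v by simp [hN])
  have hvc : v ≠ c := H.ne_of_adj (show c ∈ H.neighborSet v by simp [hN])
  obtain ⟨p, hp, hcross⟩ := exists_linearIndepOn_cross_ne_zero hp hab hca hcb
  set p' := update p v (midpoint ℝ (p a) (p b))
  have hp' : LinearIndepOn ℝ (edgeVector p') (H.deleteIncidenceSet v ⊔ edge a b).edgeSet :=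
    (linearIndepOn_congr fun e he =>
      edgeVector_update_of_notMem p _ (notMem_of_mem_edgeSet_sup_edge hva hvb he)).2 hp
  have hpa : p' a = p a := update_of_ne hva.symm _ _
  have hpb : p' b = p b := update_of_ne hvb.symm _ _
  have hpc : p' c = p c := update_of_ne hvc.symm _ _
  refine ⟨p', linearIndepOn_edgeVector_of_edgeSplit hab hN hnadj hp' ?_ ?_⟩
  · rw [hpa, hpb]
    exact update_self v _ p
  · rwa [hpa, hpb, hpc]

theorem exists_of_not_cliqueFree_sup_edge (hG : G.CliqueFree 4) {x y : V} (hxy : x ≠ y)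
    (h : ¬ (G ⊔ edge x y).CliqueFree 4) :
    ∃ s t, G.Adj x s ∧ G.Adj x t ∧ G.Adj y s ∧ G.Adj y t ∧ G.Adj s t := by
  classical
  obtain ⟨T, hT⟩ := not_forall_not.1 h
  have hx : x ∈ T := hG.mem_of_sup_edge_isNClique hT
  have hy : y ∈ T := hG.mem_of_sup_edge_isNClique (edge_comm x y ▸ hT)
  have hyx : y ∈ T.erase x := Finset.mem_erase_of_ne_of_mem hxy.symm hy
  have hxy' : x ∈ T.erase y := Finset.mem_erase_of_ne_of_mem hxy hx
  obtain ⟨s, t, -, hst⟩ : ∃ s t, s ≠ t ∧ (T.erase x).erase y = {s, t} := by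
    rw [← Finset.card_eq_two, Finset.card_erase_of_mem hyx, Finset.card_erase_of_mem hx,
      hT.card_eq]
  have h1 : G.IsNClique 3 {y, s, t} := by
    rw [← hst, Finset.insert_erase hyx]
    exact hT.erase_of_sup_edge_of_mem hx
  have h2 : G.IsNClique 3 {x, s, t} := by
    rw [← hst, Finset.erase_right_comm, Finset.insert_erase hxy']
    exact (edge_comm x y ▸ hT).erase_of_sup_edge_of_mem hy
  rw [is3Clique_triple_iff] at h1 h2
  exact ⟨s, t, h2.1, h2.2.1, h1.1, h1.2.1, h1.2.2⟩

theorem eq_or_eq_or_eq_of_neighborSet_eq {x a b c w : V} (hN : H.neighborSet x = {a, b, c})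
    (hw : H.Adj x w) : w = a ∨ w = b ∨ w = c := by
  simpa [hN] using (show w ∈ H.neighborSet x from hw)

variable [Finite V]

theorem neighborSet_eq_of_ncard_le_three {x a b c : V} (hx : (H.neighborSet x).ncard ≤ 3)
    (ha : H.Adj x a) (hb : H.Adj x b) (hc : H.Adj x c) (hab : a ≠ b) (hac : a ≠ c)
    (hbc : b ≠ c) : H.neighborSet x = {a, b, c} := by
  refine (eq_of_subset_of_ncard_le ?_ ?_).symm
  · rintro w (rfl | rfl | rfl) <;> assumption
  · rwa [ncard_eq_three.2 ⟨a, b, c, hab, hac, hbc, rfl⟩]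

/-- If adding `xy` to `H - v` creates a `K₄`, then `x` and `y` have the same two further
neighbours `s, t`, which are adjacent; as all degrees are at most three, this pins down the
neighbourhoods of `x`, `s` and `t`, and then no `K₄` can appear through `xz` instead. -/
theorem not_adj_and_cliqueFree_of_not_cliqueFree (hdeg : ∀ u, (H.neighborSet u).ncard ≤ 3)
    (hK : H.CliqueFree 4) {v x y z : V} (hx : H.Adj v x) (hy : H.Adj v y) (hz : H.Adj v z)
    (hxy : x ≠ y) (hxz : x ≠ z) (hyz : y ≠ z)
    (hbad : ¬ (H.deleteIncidenceSet v ⊔ edge x y).CliqueFree 4) :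
    ¬ H.Adj x z ∧ (H.deleteIncidenceSet v ⊔ edge x z).CliqueFree 4 := by
  have hK₀ : (H.deleteIncidenceSet v).CliqueFree 4 := hK.anti (deleteIncidenceSet_le H v)
  obtain ⟨s, t, hxs, hxt, hys, hyt, hst⟩ := exists_of_not_cliqueFree_sup_edge hK₀ hxy hbad
  simp only [deleteIncidenceSet_adj] at hxs hxt hys hyt hst
  have hNx := neighborSet_eq_of_ncard_le_three (hdeg x) hx.symm hxs.1 hxt.1 hxs.2.2.symm
    hxt.2.2.symm hst.1.ne
  have hNs := neighborSet_eq_of_ncard_le_three (hdeg s) hxs.1.symm hys.1.symm hst.1 hxy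
    hxt.1.ne hyt.1.ne
  have hNt := neighborSet_eq_of_ncard_le_three (hdeg t) hxt.1.symm hyt.1.symm hst.1.symm hxy
    hxs.1.ne hys.1.ne
  have hzs : z ≠ s := by
    rintro rfl
    rcases eq_or_eq_or_eq_of_neighborSet_eq hNs hz.symm with h | h | h
    · exact hx.ne h
    · exact hy.ne h
    · exact hst.2.2 h.symm
  have hzt : z ≠ t := by
    rintro rfl
    rcases eq_or_eq_or_eq_of_neighborSet_eq hNt hz.symm with h | h | h
    · exact hx.ne h
    · exact hy.ne h
    · exact hst.2.1 h.symm
  refine ⟨fun hxz' => ?_, ?_⟩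
  · rcases eq_or_eq_or_eq_of_neighborSet_eq hNx hxz' with h | h | h
    · exact hz.ne h.symm
    · exact hzs h
    · exact hzt h
  by_contra hbad'
  obtain ⟨s', -, hxs', -, hzs', -, -⟩ := exists_of_not_cliqueFree_sup_edge hK₀ hxz hbad'
  simp only [deleteIncidenceSet_adj] at hxs' hzs'
  rcases eq_or_eq_or_eq_of_neighborSet_eq hNx hxs'.1 with rfl | rfl | rfl
  · exact hxs'.2.2 rfl
  · rcases eq_or_eq_or_eq_of_neighborSet_eq hNs hzs'.1.symm with h | h | h
    · exact hxz h.symm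
    · exact hyz h.symm
    · exact hzt h
  · rcases eq_or_eq_or_eq_of_neighborSet_eq hNt hzs'.1.symm with h | h | h
    · exact hxz h.symm
    · exact hyz h.symm
    · exact hzs h

theorem exists_neighborSet_eq_not_adj_cliqueFree_sup_edge
    (hdeg : ∀ u, (H.neighborSet u).ncard ≤ 3) (hK : H.CliqueFree 4) {v : V}
    (hv : (H.neighborSet v).ncard = 3) :
    ∃ a b c, H.neighborSet v = {a, b, c} ∧ a ≠ b ∧ c ≠ a ∧ c ≠ b ∧ ¬ H.Adj a b ∧
      (H.deleteIncidenceSet v ⊔ edge a b).CliqueFree 4 := by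
  classical
  obtain ⟨x, y, z, hxy, hxz, hyz, hN⟩ := ncard_eq_three.1 hv
  have hadj : ∀ w ∈ ({x, y, z} : Set V), H.Adj v w := fun w hw => (hN ▸ hw : w ∈ H.neighborSet v)
  have of_not_adj : ∀ a b c, H.neighborSet v = {a, b, c} → a ≠ b → a ≠ c → b ≠ c →
      ¬ H.Adj a b → ∃ a b c, H.neighborSet v = {a, b, c} ∧ a ≠ b ∧ c ≠ a ∧ c ≠ b ∧
        ¬ H.Adj a b ∧ (H.deleteIncidenceSet v ⊔ edge a b).CliqueFree 4 := by
    intro a b c hN hab hac hbc hnadj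
    by_cases h : (H.deleteIncidenceSet v ⊔ edge a b).CliqueFree 4
    · exact ⟨a, b, c, hN, hab, hac.symm, hbc.symm, hnadj, h⟩
    have hva : H.Adj v a := show a ∈ H.neighborSet v by simp [hN]
    have hvb : H.Adj v b := show b ∈ H.neighborSet v by simp [hN]
    have hvc : H.Adj v c := show c ∈ H.neighborSet v by simp [hN]
    obtain ⟨hnadj', h'⟩ :=
      not_adj_and_cliqueFree_of_not_cliqueFree hdeg hK hva hvb hvc hab hac hbc h
    exact ⟨a, c, b, by rw [hN, pair_comm], hac, hab.symm, hbc, hnadj', h'⟩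
  by_cases hxy' : H.Adj x y
  · by_cases hxz' : H.Adj x z
    · by_cases hyz' : H.Adj y z
      · refine (hK _ (IsNClique.insert (a := v) (is3Clique_triple_iff.2 ⟨hxy', hxz', hyz'⟩)
          ?_)).elim
        simpa using hadj
      · exact of_not_adj y z x (by rw [hN]; ext; simp; tauto) hyz hxy.symm hxz.symm hyz'
    · exact of_not_adj x z y (by rw [hN, pair_comm]) hxz hxy hyz.symm hxz'
  · exact of_not_adj x y z hN hxy hxz hyz hxy'

theorem ncard_neighborSet_sup_edge_left_le {v a b : V} (ha : H.Adj v a) :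
    ((H.deleteIncidenceSet v ⊔ edge a b).neighborSet a).ncard ≤ (H.neighborSet a).ncard := by
  have hsub : (H.deleteIncidenceSet v ⊔ edge a b).neighborSet a ⊆
      insert b (H.neighborSet a \ {v}) := by
    intro w hw
    simp only [mem_neighborSet, sup_adj, deleteIncidenceSet_adj, edge_adj] at hw
    simp only [mem_insert_iff, mem_sdiff, mem_neighborSet, mem_singleton_iff]
    tauto
  calc _ ≤ (insert b (H.neighborSet a \ {v})).ncard := ncard_le_ncard hsub
    _ ≤ (H.neighborSet a \ {v}).ncard + 1 := ncard_insert_le _ _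
    _ = (H.neighborSet a).ncard := ncard_sdiff_singleton_add_one ha.symm

theorem ncard_neighborSet_sup_edge_le (hdeg : ∀ u, (H.neighborSet u).ncard ≤ 3) {v a b : V}
    (ha : H.Adj v a) (hb : H.Adj v b) (u : V) :
    ((H.deleteIncidenceSet v ⊔ edge a b).neighborSet u).ncard ≤ 3 := by
  by_cases hua : u = a
  · subst hua
    exact (ncard_neighborSet_sup_edge_left_le ha).trans (hdeg u)
  by_cases hub : u = b
  · subst hub
    rw [edge_comm]
    exact (ncard_neighborSet_sup_edge_left_le hb).trans (hdeg u)
  refine (ncard_le_ncard fun w hw => ?_).trans (hdeg u)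
  simp only [mem_neighborSet, sup_adj, deleteIncidenceSet_adj, edge_adj] at hw
  tauto

theorem exists_linearIndepOn_edgeVector [Fintype V] (H : SimpleGraph V)
    (hdeg : ∀ v, (H.neighborSet v).ncard ≤ 3) (hK : H.CliqueFree 4) :
    ∃ p : V → ℝ × ℝ, LinearIndepOn ℝ (edgeVector p) H.edgeSet := by
  induction hn : H.support.ncard using Nat.strong_induction_on generalizing H with
  | _ n ih =>
  obtain hempty | ⟨v, hv⟩ := H.support.eq_empty_or_nonempty
  · refine ⟨0, ?_⟩
    convert linearIndepOn_empty ℝ (edgeVector 0)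
    refine eq_empty_of_forall_notMem fun e he => ?_
    induction e using Sym2.ind with
    | _ x y => exact hempty.subset ⟨y, he⟩
  have hsmall : ∀ H' : SimpleGraph V, H'.support ⊆ H.support \ {v} → H'.support.ncard < n :=
    fun H' h => hn ▸ ncard_lt_ncard (h.trans_ssubset (sdiff_singleton_ssubset.2 hv))
  rcases (hdeg v).lt_or_eq with hlt | h3
  · obtain ⟨p, hp⟩ := ih _ (hsmall _ (support_deleteIncidenceSet_subset H v)) _
      (fun u => (ncard_le_ncard (neighborSet_mono (deleteIncidenceSet_le H v) u)).trans (hdeg u))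
      (hK.anti (deleteIncidenceSet_le H v)) rfl
    exact exists_linearIndepOn_edgeVector_of_ncard_neighborSet_le_two hp (by omega)
  · obtain ⟨a, b, c, hN, hab, hca, hcb, hnadj, hK'⟩ :=
      exists_neighborSet_eq_not_adj_cliqueFree_sup_edge hdeg hK h3
    have ha : H.Adj v a := show a ∈ H.neighborSet v by simp [hN]
    have hb : H.Adj v b := show b ∈ H.neighborSet v by simp [hN]
    obtain ⟨p, hp⟩ := ih _ (hsmall _ (support_sup_edge_subset ha hb)) _
      (ncard_neighborSet_sup_edge_le hdeg ha hb) hK' rfl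
    exact exists_linearIndepOn_edgeVector_of_edgeSplit hab hca hcb hN hnadj hp

theorem Connected.cliqueFree_of_ncard_neighborSet_le [Fintype V] {G : SimpleGraph V} {d : ℕ}
    (hconn : G.Connected) (hdeg : ∀ v, (G.neighborSet v).ncard ≤ d)
    (hcard : d + 1 < Fintype.card V) : G.CliqueFree (d + 1) := by
  classical
  intro T hT
  have hclosed : ∀ u ∈ T, ∀ w, G.Adj u w → w ∈ T := by
    intro u hu w huw
    have hsub : ((T.erase u : Finset V) : Set V) ⊆ G.neighborSet u := fun w hw =>
      hT.1 hu (Finset.mem_of_mem_erase hw) (Finset.ne_of_mem_erase hw).symm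
    have heq := eq_of_subset_of_ncard_le hsub
      (by rw [ncard_coe_finset, Finset.card_erase_of_mem hu, hT.2]; exact hdeg u)
    exact Finset.mem_of_mem_erase (heq ▸ huw : w ∈ ((T.erase u : Finset V) : Set V))
  have hwalk : ∀ {x y : V} (q : G.Walk x y), x ∈ T → y ∈ T := by
    intro x y q
    induction q with
    | nil => exact id
    | cons h _ ih => exact fun hx => ih (hclosed _ hx _ h)
  obtain ⟨u, hu⟩ : T.Nonempty := Finset.card_pos.1 (by rw [hT.2]; omega)
  have hle : Fintype.card V ≤ T.card :=
    Finset.card_le_card fun w _ => hwalk (hconn.preconnected u w).some hu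
  exact absurd (hT.2 ▸ hle) hcard.not_ge

end SimpleGraph

theorem genRank_eq_card_edges_of_three_regular_general {V : Type*} [Fintype V]
    (G : SimpleGraph V) [DecidableRel G.Adj]
    (hconn : G.Connected) (hreg : G.IsRegularOfDegree 3)
    (hcard : 4 < Fintype.card V) :
    genRank G = G.edgeSet.ncard := by
  have hdeg : ∀ v, (G.neighborSet v).ncard = 3 := fun v => by
    rw [← Nat.card_coe_set_eq, Nat.card_eq_fintype_card, SimpleGraph.card_neighborSet_eq_degree,
      hreg v]
  obtain ⟨p, hp⟩ := SimpleGraph.exists_linearIndepOn_edgeVector G (fun v => (hdeg v).le)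
    (hconn.cliqueFree_of_ncard_neighborSet_le (fun v => (hdeg v).le) hcard)
  exact genRankSet_eq_ncard hp

/-- If `G` is a finite simple connected 3-regular graph with more than 4 vertices, then
`r(G) = |E|` (equivalently `s(G) = 0`). -/
theorem genRank_eq_card_edges_of_three_regular {V : Type*} [Fintype V] [DecidableEq V]
    (G : SimpleGraph V) [DecidableRel G.Adj]
    (hconn : G.Connected) (hreg : G.IsRegularOfDegree 3)
    (hcard : 4 < Fintype.card V) :
    genRank G = G.edgeSet.ncard :=
  genRank_eq_card_edges_of_three_regular_general G hconn hreg hcard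
end

section
/- Let V be a finite set with |V| ≥ 2 and let p : V → ℝ² be in general position. Then the dimension of the linear span of the edge vectors of the complete graph on V, i.e. of {v_{ij}(p) : i,j ∈ V, i ≠ j}, equals 2·|V| − 3. -/
/-!
Read `f : V → ℝ × ℝ` as a load, a force applied at each point `p v`. Every edge vector is a load
in equilibrium: zero net force and zero net torque. So the span of the edge vectors lies in the
kernel of the resultant map `f ↦ (∑ f v, ∑ p v × f v)` to `ℝ² × ℝ`. That map is onto as soon as
two points differ, so its kernel has dimension `2 |V| - 3`. Conversely, fix `a ≠ b`. For every other vertex `v`,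
the vectors `p v - p a` and `p v - p b` span the plane, so the edge vectors of `va` and `vb` move
any load at `v` onto `a` and `b`; and a load in equilibrium supported on `{a, b}` is a multiple
of the edge vector of `ab`.
-/

open Module Submodule

namespace PlaneRigidity

def cross : (ℝ × ℝ) →ₗ[ℝ] (ℝ × ℝ) →ₗ[ℝ] ℝ :=
  LinearMap.mk₂ ℝ (fun a b => a.1 * b.2 - a.2 * b.1)
    (fun _ _ _ => by simp only [Prod.fst_add, Prod.snd_add]; ring)
    (fun _ _ _ => by simp only [Prod.smul_fst, Prod.smul_snd, smul_eq_mul]; ring)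
    (fun _ _ _ => by simp only [Prod.fst_add, Prod.snd_add]; ring)
    (fun _ _ _ => by simp only [Prod.smul_fst, Prod.smul_snd, smul_eq_mul]; ring)

@[simp]
lemma cross_apply (a b : ℝ × ℝ) : cross a b = a.1 * b.2 - a.2 * b.1 := rfl

lemma cross_self (a : ℝ × ℝ) : cross a a = 0 := by
  rw [cross_apply]; ring

lemma cross_ne_zero {u : ℝ × ℝ} (hu : u ≠ 0) : cross u ≠ 0 := by
  intro h
  have h1 := LinearMap.congr_fun h (0, 1)
  have h2 := LinearMap.congr_fun h (1, 0)
  simp only [cross_apply, LinearMap.zero_apply] at h1 h2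
  exact hu (Prod.ext (by simpa using h1) (by simpa using h2))

lemma ker_cross {u : ℝ × ℝ} (hu : u ≠ 0) : LinearMap.ker (cross u) = ℝ ∙ u := by
  refine (eq_of_le_of_finrank_eq ?_ ?_).symm
  · rw [span_singleton_le_iff_mem, LinearMap.mem_ker, cross_self]
  · have := Dual.finrank_ker_add_one_of_ne_zero (cross_ne_zero hu)
    rw [finrank_span_singleton hu]
    simp only [finrank_prod, finrank_self] at this
    omega

lemma span_sub_pair_eq_top_of_not_collinear {x y z : ℝ × ℝ}
    (h : ¬ Collinear ℝ ({x, y, z} : Set (ℝ × ℝ))) : span ℝ {x - y, x - z} = ⊤ := by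
  have hvs : vectorSpan ℝ ({x, y, z} : Set (ℝ × ℝ)) = span ℝ {x - y, x - z} := by
    rw [vectorSpan_eq_span_vsub_set_left ℝ (Set.mem_insert x _)]
    simp [Set.image_insert_eq, span_insert_zero]
  by_contra hne
  apply h
  rw [collinear_iff_finrank_le_one, hvs]
  have := finrank_lt hne
  simp only [finrank_prod, finrank_self] at this
  omega

variable {V : Type*}

def edgeSpan (p : V → ℝ × ℝ) : Submodule ℝ (V → ℝ × ℝ) :=
  span ℝ {x | ∃ i j : V, i ≠ j ∧ x = edgeVec p i j}

lemma edgeVec_mem_edgeSpan (p : V → ℝ × ℝ) {i j : V} (hij : i ≠ j) :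
    edgeVec p i j ∈ edgeSpan p :=
  subset_span ⟨i, j, hij, rfl⟩

lemma edgeVec_eq_single_sub_single [DecidableEq V] (p : V → ℝ × ℝ) {i j : V} (hij : i ≠ j) :
    edgeVec p i j = Pi.single i (p i - p j) - Pi.single j (p i - p j) := by
  funext v
  by_cases hi : v = i
  · subst hi; simp [edgeVec, hij]
  · by_cases hj : v = j
    · subst hj; simp [edgeVec, hi]
    · simp [edgeVec, hi, hj]

lemma single_mem_vanishOn [DecidableEq V] {U : Set V} {u : V} (hu : u ∈ U) (x : ℝ × ℝ) :
    Pi.single u x ∈ vanishOn U :=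
  fun _ hw => Pi.single_eq_of_ne (ne_of_mem_of_not_mem hu hw).symm _

lemma single_mem_edgeSpan_sup_vanishOn [DecidableEq V] {p : V → ℝ × ℝ} (hp : GeneralPosition p)
    {a b : V} (hab : a ≠ b) (v : V) (x : ℝ × ℝ) :
    Pi.single v x ∈ edgeSpan p ⊔ vanishOn {a, b} := by
  by_cases hv : v ∈ ({a, b} : Set V)
  · exact mem_sup_right (single_mem_vanishOn hv x)
  simp only [Set.mem_insert_iff, Set.mem_singleton_iff, not_or] at hv
  have hsingle : ∀ u ∈ ({a, b} : Set V), v ≠ u →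
      Pi.single v (p v - p u) ∈ edgeSpan p ⊔ vanishOn {a, b} := fun u hu hvu => by
    have := add_mem (mem_sup_left (edgeVec_mem_edgeSpan p hvu))
      (mem_sup_right (single_mem_vanishOn hu (p v - p u)))
    rwa [edgeVec_eq_single_sub_single p hvu, sub_add_cancel] at this
  have hspan : span ℝ {p v - p a, p v - p b} ≤
      (edgeSpan p ⊔ vanishOn {a, b}).comap (LinearMap.single ℝ (fun _ => ℝ × ℝ) v) := by
    rw [span_le]
    rintro _ (rfl | rfl)
    · exact hsingle a (by simp) hv.1
    · exact hsingle b (by simp) hv.2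
  rw [span_sub_pair_eq_top_of_not_collinear (hp.2 v a b hv.1 hab hv.2)] at hspan
  exact hspan mem_top

variable [Fintype V]

def resultant (p : V → ℝ × ℝ) : (V → ℝ × ℝ) →ₗ[ℝ] (ℝ × ℝ) × ℝ :=
  (∑ v, LinearMap.proj v).prod (∑ v, (cross (p v)).comp (LinearMap.proj v))

lemma resultant_apply (p f : V → ℝ × ℝ) :
    resultant p f = (∑ v, f v, ∑ v, cross (p v) (f v)) := by
  simp [resultant]

lemma resultant_single [DecidableEq V] (p : V → ℝ × ℝ) (v : V) (a : ℝ × ℝ) :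
    resultant p (Pi.single v a) = (a, cross (p v) a) := by
  rw [resultant_apply, Finset.sum_pi_single', Finset.sum_eq_single v]
  · simp
  · intro w _ hwv; rw [Pi.single_eq_of_ne hwv, map_zero]
  · simp

lemma resultant_edgeVec (p : V → ℝ × ℝ) {i j : V} (hij : i ≠ j) :
    resultant p (edgeVec p i j) = 0 := by
  classical
  rw [edgeVec_eq_single_sub_single p hij, map_sub, resultant_single, resultant_single,
    Prod.mk_sub_mk, sub_self, ← LinearMap.sub_apply, ← map_sub, cross_self, Prod.mk_zero_zero]

lemma edgeSpan_le_ker_resultant (p : V → ℝ × ℝ) : edgeSpan p ≤ LinearMap.ker (resultant p) :=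
  span_le.mpr fun _ ⟨_, _, hij, he⟩ => he ▸ resultant_edgeVec p hij

lemma mem_edgeSpan_of_mem_ker_of_mem_vanishOn {p : V → ℝ × ℝ} {a b : V} (hab : p a ≠ p b)
    {f : V → ℝ × ℝ} (hf : f ∈ LinearMap.ker (resultant p)) (hfab : f ∈ vanishOn {a, b}) :
    f ∈ edgeSpan p := by
  have hab' : a ≠ b := fun h => hab (congrArg p h)
  have hvanish : ∀ v, v ≠ a ∧ v ≠ b → f v = 0 := fun v hv => hfab v (by simpa using hv)
  rw [LinearMap.mem_ker, resultant_apply, Prod.mk_eq_zero,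
    Fintype.sum_eq_add a b hab' hvanish,
    Fintype.sum_eq_add a b hab' fun v hv => by rw [hvanish v hv, map_zero]] at hf
  obtain ⟨hforce, htorque⟩ := hf
  have hfb : f b = -f a := eq_neg_of_add_eq_zero_right hforce
  have hfa : f a ∈ LinearMap.ker (cross (p a - p b)) := by
    rw [hfb, map_neg, ← sub_eq_add_neg] at htorque
    rwa [LinearMap.mem_ker, map_sub, LinearMap.sub_apply]
  obtain ⟨c, hc⟩ := mem_span_singleton.mp (ker_cross (sub_ne_zero.mpr hab) ▸ hfa)
  have hf_eq : f = c • edgeVec p a b := by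
    funext v
    by_cases ha : v = a
    · subst ha; simp [edgeVec, hc]
    by_cases hb : v = b
    · subst hb; simp [edgeVec, ha, hfb, ← hc, smul_sub]
    · simp [edgeVec, ha, hb, hvanish v ⟨ha, hb⟩]
  rw [hf_eq]
  exact smul_mem _ c (edgeVec_mem_edgeSpan p hab')

lemma edgeSpan_sup_vanishOn_eq_top {p : V → ℝ × ℝ} (hp : GeneralPosition p) {a b : V}
    (hab : a ≠ b) : edgeSpan p ⊔ vanishOn {a, b} = ⊤ := by
  classical
  refine eq_top_iff.mpr fun f _ => ?_
  rw [← Finset.univ_sum_single f]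
  exact sum_mem fun v _ => single_mem_edgeSpan_sup_vanishOn hp hab v (f v)

theorem edgeSpan_eq_ker_resultant {p : V → ℝ × ℝ} (hp : GeneralPosition p) {a b : V}
    (hab : a ≠ b) : edgeSpan p = LinearMap.ker (resultant p) := by
  refine le_antisymm (edgeSpan_le_ker_resultant p) fun f hf => ?_
  have hf' : f ∈ edgeSpan p ⊔ vanishOn {a, b} := edgeSpan_sup_vanishOn_eq_top hp hab ▸ mem_top
  obtain ⟨e, he, w, hw, rfl⟩ := mem_sup.mp hf'
  have hwker : w ∈ LinearMap.ker (resultant p) := by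
    simpa using sub_mem hf (edgeSpan_le_ker_resultant p he)
  exact add_mem he (mem_edgeSpan_of_mem_ker_of_mem_vanishOn (hp.1.ne hab) hwker hw)

theorem resultant_surjective {p : V → ℝ × ℝ} (hp : Function.Injective p) {a b : V}
    (hab : a ≠ b) : Function.Surjective (resultant p) := by
  classical
  rintro ⟨s, m⟩
  obtain ⟨x, hx⟩ := LinearMap.surjective (cross_ne_zero (sub_ne_zero.mpr (hp.ne hab)))
    (m - cross (p b) s)
  refine ⟨Pi.single a x + Pi.single b (s - x), ?_⟩
  rw [map_sub, LinearMap.sub_apply] at hx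
  rw [map_add, resultant_single, resultant_single, Prod.mk_add_mk, add_sub_cancel, map_sub]
  congr 1
  linear_combination hx

end PlaneRigidity

open PlaneRigidity in
/-- If `|V| ≥ 2` and `p` is in general position, then the span of the edge vectors of the
complete graph on `V` has dimension `2 |V| - 3`. -/
theorem finrank_span_completeGraph {V : Type*} [Fintype V] (p : V → ℝ × ℝ)
    (hp : GeneralPosition p) (h2 : 2 ≤ Fintype.card V) :
    Module.finrank ℝ (Submodule.span ℝ {x | ∃ i j : V, i ≠ j ∧ x = edgeVec p i j})
      = 2 * Fintype.card V - 3 := by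
  obtain ⟨a, b, hab⟩ := Fintype.exists_pair_of_one_lt_card h2
  have hrank := LinearMap.finrank_range_add_finrank_ker (resultant p)
  rw [LinearMap.range_eq_top.mpr (resultant_surjective hp.1 hab), finrank_top,
    ← edgeSpan_eq_ker_resultant hp hab] at hrank
  simp only [finrank_prod, finrank_self, finrank_pi_fintype, Finset.sum_const, Finset.card_univ,
    smul_eq_mul] at hrank
  change finrank ℝ (edgeSpan p) = _
  omega
end

section
/- Let V be a finite set, p : V → ℝ² a map in general position, and U ⊆ V a subset with |U| ≥ 2. Then span{v_{ij}(p) : i,j ∈ V, i ≠ j} + W_U is the whole space of functions V → ℝ², where the span is over all edge vectors of the complete graph on V and W_U is the subspace of functions V → ℝ² vanishing at every vertex of V \ U. -/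
/-!
Modulo `W_U` the edge vector `v_{vw}` of an edge with `w ∈ U` reduces to the vector supported
at `v` with value `p v - p w`. A vertex `v ∈ U` is handled by `W_U` itself. For `v ∉ U`, pick
distinct `a, b ∈ U`: by general position `p v, p a, p b` are not collinear, so `p v - p a` and
`p v - p b` span `ℝ²`, and every vector supported at `v` lies in the sum. Since the vectors
supported at single vertices span everything, the sum is the whole space.
-/

theorem vectorSpan_eq_top_of_not_collinear {k E : Type*} [Field k] [AddCommGroup E] [Module k E]
    (hE : Module.finrank k E = 2) {x y z : E} (h : ¬ Collinear k ({x, y, z} : Set E)) :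
    vectorSpan k ({x, y, z} : Set E) = ⊤ := by
  have : FiniteDimensional k E := Module.finite_of_finrank_eq_succ hE
  have htop := (affineIndependent_iff_not_collinear_set.mpr h)
    |>.vectorSpan_eq_top_of_card_eq_finrank_add_one (by simp [hE])
  simp_rw [Matrix.range_cons, Matrix.range_empty, Set.singleton_union, insert_empty_eq] at htop
  exact htop

section

variable {V : Type*}

theorem edgeVec_eq_single_add_single [DecidableEq V] (p : V → ℝ × ℝ) {i j : V} (h : i ≠ j) :
    edgeVec p i j = Pi.single i (p i - p j) + Pi.single j (p j - p i) := by
  ext1 v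
  by_cases hi : v = i
  · subst hi; simp [edgeVec, h]
  · by_cases hj : v = j
    · subst hj; simp [edgeVec, hi]
    · simp [edgeVec, hi, hj]

theorem single_mem_vanishOn [DecidableEq V] {U : Set V} {v : V} (hv : v ∈ U) (c : ℝ × ℝ) :
    Pi.single v c ∈ vanishOn U := fun _ hu => Pi.single_eq_of_ne (ne_of_mem_of_not_mem hv hu).symm _

theorem single_sub_mem_sup_vanishOn [DecidableEq V] {p : V → ℝ × ℝ}
    {K : Submodule ℝ (V → ℝ × ℝ)} {U : Set V} {v w : V} (hvw : v ≠ w) (hw : w ∈ U)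
    (hK : edgeVec p v w ∈ K) : Pi.single v (p v - p w) ∈ K ⊔ vanishOn U := by
  have h := Submodule.sub_mem _ (Submodule.mem_sup_left hK)
    (Submodule.mem_sup_right (single_mem_vanishOn hw (p w - p v)))
  rwa [edgeVec_eq_single_add_single p hvw, add_sub_cancel_right] at h

theorem comap_single_sup_vanishOn_eq_top [DecidableEq V] {p : V → ℝ × ℝ}
    {K : Submodule ℝ (V → ℝ × ℝ)} {U : Set V} {v a b : V} (hva : v ≠ a) (hvb : v ≠ b)
    (ha : a ∈ U) (hb : b ∈ U) (hKa : edgeVec p v a ∈ K) (hKb : edgeVec p v b ∈ K)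
    (h : ¬ Collinear ℝ ({p v, p a, p b} : Set (ℝ × ℝ))) :
    (K ⊔ vanishOn U).comap (LinearMap.single ℝ (fun _ : V => ℝ × ℝ) v) = ⊤ := by
  rw [eq_top_iff, ← vectorSpan_eq_top_of_not_collinear (by simp) h,
    vectorSpan_eq_span_vsub_set_left ℝ (Set.mem_insert _ _), Submodule.span_le]
  rintro _ ⟨w, hw, rfl⟩
  rcases hw with rfl | rfl | rfl
  · simp
  · exact single_sub_mem_sup_vanishOn hva ha hKa
  · exact single_sub_mem_sup_vanishOn hvb hb hKb

end

/-- If `p` is in general position and `U ⊆ V` has `|U| ≥ 2`, then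
`span{v_ij(p) : i ≠ j in V} + W_U` is the whole space of functions `V → ℝ × ℝ`. -/
theorem span_completeGraph_sup_vanishOn {V : Type*} [Fintype V] (p : V → ℝ × ℝ)
    (hp : GeneralPosition p) (U : Set V) (hU : 2 ≤ U.ncard) :
    Submodule.span ℝ {x | ∃ i j : V, i ≠ j ∧ x = edgeVec p i j} ⊔ vanishOn U = ⊤ := by
  classical
  obtain ⟨a, b, ha, hb, hab⟩ := (Set.one_lt_ncard_iff U.toFinite).mp hU
  have hK {i j : V} (h : i ≠ j) :
      edgeVec p i j ∈ Submodule.span ℝ {x | ∃ i j : V, i ≠ j ∧ x = edgeVec p i j} :=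
    Submodule.subset_span ⟨i, j, h, rfl⟩
  rw [eq_top_iff, ← LinearMap.iSup_range_single ℝ (fun _ : V => ℝ × ℝ)]
  refine iSup_le fun v => LinearMap.range_le_iff_comap.mpr ?_
  by_cases hv : v ∈ U
  · exact eq_top_iff.mpr fun c _ => Submodule.mem_sup_right (single_mem_vanishOn hv c)
  · have hva : v ≠ a := ne_of_mem_of_not_mem ha hv |>.symm
    have hvb : v ≠ b := ne_of_mem_of_not_mem hb hv |>.symm
    exact comap_single_sup_vanishOn_eq_top hva hvb ha hb (hK hva) (hK hvb)
      (hp.2 v a b hva hab hvb)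
end
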